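/- (Theorem 2.1, optimality of the BLUP at a point.) Let K : (T ∪ {t₀}) × (T ∪ {t₀}) → ℝ be a symmetric measurable kernel whose quadratic form is nonnegative on finite signed measures on T, let f be defined on T ∪ {t₀} with values in ℝ^m, and let t₀ ∉ T. Suppose: (i) there exist finite signed measures G₁,…,G_m on T and an m×m matrix D with ∫_T f_i(t) G_j(dt) = δ_{ij} and ∫_T K(t,s) G(dt) = D f(s) for all s ∈ T; (ii) there exists a finite signed measure ζ_{t₀} on T with ∫_T K(t,s) ζ_{t₀}(dt) = K(t₀,s) for all s ∈ T. Set c = f(t₀) − ∫_T f(t) ζ_{t₀}(dt) and Q* = ζ_{t₀} + Σ_j c_j G_j. Then for every finite signed measure Q on T with ∫_T f(t) Q(dt) = f(t₀), it holds that M(Q) ≥ M(Q*), where M(Q) = K(t₀,t₀) − 2 ∫_T K(t,t₀) Q(dt) + ∬_{T×T} K(t,s) Q(dt)Q(ds). -/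

import Mathlib

/-!
Write `R = Q - Q*`. Expanding the quadratic form,
`M Q = M Q* + 2 (∬ K dR dQ* - ∫ K(·, t₀) dR) + ∬ K dR dR`.
By (i) and (ii), `∫ K(t, ·) Q*(dt) = K(t₀, ·) + ∑ⱼ aⱼ fⱼ` with `a = cᵀ D`, so the cross term is
`∑ⱼ aⱼ ∫ fⱼ dR`, which vanishes because `Q` and `Q*` are both unbiased; the last term is
nonnegative by assumption.
-/

open MeasureTheory

/-- Integral of a real function against a finite signed measure, via the Jordan
decomposition. -/
noncomputable def sInt {α : Type*} [MeasurableSpace α] (μ : SignedMeasure α) (g : α → ℝ) : ℝ :=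
  (∫ x, g x ∂μ.toJordanDecomposition.posPart) - ∫ x, g x ∂μ.toJordanDecomposition.negPart

open Function

instance SignedMeasure.isFiniteMeasure_variation {α : Type*} [MeasurableSpace α]
    (μ : SignedMeasure α) : IsFiniteMeasure μ.variation :=
  μ.totalVariation_eq_variation ▸ inferInstance

def IsBoundedMeasurable {β : Type*} [MeasurableSpace β] (g : β → ℝ) : Prop :=
  Measurable g ∧ ∃ C, ∀ x, |g x| ≤ C

namespace IsBoundedMeasurable

variable {β γ : Type*} [MeasurableSpace β] [MeasurableSpace γ] {g h : β → ℝ}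

theorem integrable (hg : IsBoundedMeasurable g) (a : Measure β) [IsFiniteMeasure a] :
    Integrable g a :=
  let ⟨C, hC⟩ := hg.2
  .of_bound hg.1.aestronglyMeasurable C (ae_of_all _ hC)

theorem comp (hg : IsBoundedMeasurable g) {φ : γ → β} (hφ : Measurable φ) :
    IsBoundedMeasurable (g ∘ φ) :=
  ⟨hg.1.comp hφ, hg.2.imp fun _ hC x => hC (φ x)⟩

theorem sub (hg : IsBoundedMeasurable g) (hh : IsBoundedMeasurable h) :
    IsBoundedMeasurable (fun x => g x - h x) := by
  obtain ⟨Cg, hCg⟩ := hg.2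
  obtain ⟨Ch, hCh⟩ := hh.2
  exact ⟨hg.1.sub hh.1, Cg + Ch, fun x => (abs_sub _ _).trans (add_le_add (hCg x) (hCh x))⟩

theorem integral_right {F : β → γ → ℝ} (hF : IsBoundedMeasurable (uncurry F))
    (a : Measure γ) [IsFiniteMeasure a] :
    IsBoundedMeasurable fun x => ∫ y, F x y ∂a := by
  obtain ⟨C, hC⟩ := hF.2
  refine ⟨hF.1.stronglyMeasurable.integral_prod_right.measurable, C * a.real Set.univ, fun x => ?_⟩
  exact norm_integral_le_of_norm_le_const (f := F x) (ae_of_all a fun y => hC (x, y))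

theorem sInt_right {F : β → γ → ℝ} (hF : IsBoundedMeasurable (uncurry F)) (ν : SignedMeasure γ) :
    IsBoundedMeasurable fun x => sInt ν (F x) :=
  (hF.integral_right _).sub (hF.integral_right _)

end IsBoundedMeasurable

section sInt

variable {α : Type*} [MeasurableSpace α] {μ ν : SignedMeasure α} {g h : α → ℝ}

theorem sInt_eq_integral (hg : Integrable g μ.variation) : sInt μ g = ∫ᵛ x, g x ∂<•μ := by
  rw [← μ.totalVariation_eq_variation, SignedMeasure.totalVariation, integrable_add_measure] at hg
  conv_rhs => rw [← μ.toSignedMeasure_toJordanDecomposition]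
  have hpos : VectorMeasure.Integrable μ.toJordanDecomposition.posPart.toSignedMeasure g := by
    rw [VectorMeasure.Integrable, Measure.variation_toSignedMeasure]; exact hg.1
  have hneg : VectorMeasure.Integrable μ.toJordanDecomposition.negPart.toSignedMeasure g := by
    rw [VectorMeasure.Integrable, Measure.variation_toSignedMeasure]; exact hg.2
  rw [JordanDecomposition.toSignedMeasure, VectorMeasure.integral_sub_vectorMeasure hpos hneg,
    VectorMeasure.integral_toSignedMeasure, VectorMeasure.integral_toSignedMeasure, sInt]

theorem sInt_add (hg : Integrable g μ.variation) (hh : Integrable h μ.variation) :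
    sInt μ (fun x => g x + h x) = sInt μ g + sInt μ h := by
  rw [sInt_eq_integral hg, sInt_eq_integral hh, sInt_eq_integral (hg.fun_add hh),
    VectorMeasure.integral_fun_add hg hh]

theorem sInt_sub (hg : Integrable g μ.variation) (hh : Integrable h μ.variation) :
    sInt μ (fun x => g x - h x) = sInt μ g - sInt μ h := by
  rw [sInt_eq_integral hg, sInt_eq_integral hh, sInt_eq_integral (hg.sub' hh),
    VectorMeasure.integral_fun_sub hg hh]

theorem sInt_const_mul (r : ℝ) (g : α → ℝ) : sInt μ (fun x => r * g x) = r * sInt μ g := by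
  simp only [sInt, integral_const_mul, mul_sub]

theorem sInt_finsetSum {ι : Type*} (s : Finset ι) {g : ι → α → ℝ}
    (hg : ∀ i ∈ s, Integrable (g i) μ.variation) :
    sInt μ (fun x => ∑ i ∈ s, g i x) = ∑ i ∈ s, sInt μ (g i) := by
  rw [sInt_eq_integral (integrable_finsetSum s hg), VectorMeasure.integral_finsetSum s hg]
  exact Finset.sum_congr rfl fun i hi => (sInt_eq_integral (hg i hi)).symm

noncomputable def sIntLinearMap (g : α → ℝ) (hg : IsBoundedMeasurable g) :
    SignedMeasure α →ₗ[ℝ] ℝ where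
  toFun μ := sInt μ g
  map_add' μ ν := by
    rw [sInt_eq_integral (hg.integrable _), sInt_eq_integral (hg.integrable _),
      sInt_eq_integral (hg.integrable _),
      VectorMeasure.integral_add_vectorMeasure (hg.integrable _) (hg.integrable _)]
  map_smul' r μ := by
    rw [sInt_eq_integral (hg.integrable _), sInt_eq_integral (hg.integrable _),
      VectorMeasure.integral_smul_vectorMeasure]
    rfl

@[simp]
theorem sIntLinearMap_apply (hg : IsBoundedMeasurable g) (μ : SignedMeasure α) :
    sIntLinearMap g hg μ = sInt μ g :=
  rfl

end sInt

section Fubini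

variable {β γ : Type*} [MeasurableSpace β] [MeasurableSpace γ] {F : β → γ → ℝ}

theorem integral_sInt_comm (hF : IsBoundedMeasurable (uncurry F)) (a : Measure β)
    [IsFiniteMeasure a] (ν : SignedMeasure γ) :
    ∫ x, sInt ν (F x) ∂a = sInt ν fun y => ∫ x, F x y ∂a := by
  simp only [sInt]
  rw [integral_sub ((hF.integral_right _).integrable a) ((hF.integral_right _).integrable a),
    integral_integral_swap (hF.integrable _), integral_integral_swap (hF.integrable _)]

theorem sInt_comm (hF : IsBoundedMeasurable (uncurry F)) (μ : SignedMeasure β)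
    (ν : SignedMeasure γ) :
    (sInt μ fun x => sInt ν (F x)) = sInt ν fun y => sInt μ fun x => F x y := by
  have hF' : IsBoundedMeasurable (uncurry fun y x => F x y) := hF.comp measurable_swap
  rw [sInt, integral_sInt_comm hF, integral_sInt_comm hF,
    ← sInt_sub ((hF'.integral_right _).integrable _) ((hF'.integral_right _).integrable _)]
  rfl

end Fubini

section KernelForm

variable {α : Type*} [MeasurableSpace α] {F : α → α → ℝ}

noncomputable def kernelForm (F : α → α → ℝ) (hF : IsBoundedMeasurable (uncurry F)) :
    LinearMap.BilinForm ℝ (SignedMeasure α) :=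
  LinearMap.mk₂ ℝ (fun μ ν => sInt μ fun x => sInt ν (F x))
    (fun _ _ ν => map_add (sIntLinearMap _ (hF.sInt_right ν)) _ _)
    (fun r μ ν => map_smul (sIntLinearMap _ (hF.sInt_right ν)) r μ)
    (fun μ ν₁ ν₂ => by
      have h x : sInt (ν₁ + ν₂) (F x) = sInt ν₁ (F x) + sInt ν₂ (F x) :=
        map_add (sIntLinearMap (F x) (hF.comp measurable_prodMk_left)) ν₁ ν₂
      simp only [h]
      exact sInt_add ((hF.sInt_right ν₁).integrable _) ((hF.sInt_right ν₂).integrable _))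
    (fun r μ ν => by
      have h x : sInt (r • ν) (F x) = r * sInt ν (F x) :=
        map_smul (sIntLinearMap (F x) (hF.comp measurable_prodMk_left)) r ν
      simp only [h]
      exact sInt_const_mul r _)

theorem kernelForm_apply (hF : IsBoundedMeasurable (uncurry F)) (μ ν : SignedMeasure α) :
    kernelForm F hF μ ν = sInt μ fun x => sInt ν (F x) :=
  rfl

theorem kernelForm_isSymm (hF : IsBoundedMeasurable (uncurry F)) (hsymm : ∀ x y, F x y = F y x) :
    (kernelForm F hF).IsSymm := by
  refine ⟨fun μ ν => ?_⟩
  rw [kernelForm_apply, kernelForm_apply, sInt_comm hF]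
  exact congrArg (sInt ν) (funext fun y => congrArg (sInt μ) (funext fun x => hsymm x y))

end KernelForm

theorem LinearMap.BilinForm.IsSymm.apply_self_sub_two_mul_le {V : Type*} [AddCommGroup V]
    [Module ℝ V] {B : LinearMap.BilinForm ℝ V} (hB : B.IsSymm) (ℓ : V →ₗ[ℝ] ℝ) {x y : V}
    (hpos : 0 ≤ B (y - x) (y - x)) (horth : B (y - x) x = ℓ (y - x)) :
    B x x - 2 * ℓ x ≤ B y y - 2 * ℓ y := by
  obtain ⟨r, rfl⟩ : ∃ r, y = x + r := ⟨y - x, by abel⟩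
  rw [add_sub_cancel_left] at hpos horth
  have := hB.eq x r
  simp only [map_add, LinearMap.add_apply]
  linarith

section UnbiasedCombination

variable {α : Type*} [MeasurableSpace α]

theorem sInt_add_sum_smul {ι : Type*} (s : Finset ι) {g : α → ℝ} (hg : IsBoundedMeasurable g)
    (ζ : SignedMeasure α) (c : ι → ℝ) (G : ι → SignedMeasure α) :
    sInt (ζ + ∑ j ∈ s, c j • G j) g = sInt ζ g + ∑ j ∈ s, c j * sInt (G j) g := by
  simpa using map_add (sIntLinearMap g hg) ζ (∑ j ∈ s, c j • G j)

theorem sInt_add_sum_mul_of_forall_eq_zero {ι : Type*} (s : Finset ι) {R : SignedMeasure α}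
    {g : α → ℝ} {φ : ι → α → ℝ} (hg : Integrable g R.variation)
    (hφ : ∀ j, Integrable (φ j) R.variation) (hR : ∀ j, sInt R (φ j) = 0) (a : ι → ℝ) :
    sInt R (fun x => g x + ∑ j ∈ s, a j * φ j x) = sInt R g := by
  rw [sInt_add hg (integrable_finsetSum s fun j _ => (hφ j).const_mul (a j)),
    sInt_finsetSum s fun j _ => (hφ j).const_mul (a j)]
  simp [sInt_const_mul, hR]

end UnbiasedCombination

theorem blup_point_optimality_general {d m : ℕ}
    (T : Set (Fin d → ℝ))
    (t0 : Fin d → ℝ)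
    (K : (Fin d → ℝ) → (Fin d → ℝ) → ℝ)
    (hKmeas : Measurable (Function.uncurry K))
    (hKbd : ∃ C, ∀ t s, |K t s| ≤ C)
    (hKsym : ∀ t s, K t s = K s t)
    -- nonnegativity of the quadratic form on finite signed measures on `T`:
    (hKpos : ∀ R : SignedMeasure T, 0 ≤ sInt R fun t => sInt R fun s => K t.1 s.1)
    (f : (Fin d → ℝ) → Fin m → ℝ)
    (hfmeas : ∀ i, Measurable fun t => f t i)
    (hfbd : ∃ C, ∀ t i, |f t i| ≤ C)
    -- (i) existence of the BLUE measure `G` with matrix `D`: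
    (G : Fin m → SignedMeasure T) (D : Fin m → Fin m → ℝ)
    (hG1 : ∀ i j, sInt (G j) (fun t => f t.1 i) = if i = j then 1 else 0)
    (hG2 : ∀ (s : T) (k : Fin m),
      sInt (G k) (fun t => K t.1 s.1) = ∑ j, D k j * f s.1 j)
    -- (ii) existence of the measure `ζ_{t₀}`:
    (ζ : SignedMeasure T)
    (hζ : ∀ s : T, sInt ζ (fun t => K t.1 s.1) = K t0 s.1)
    (c : Fin m → ℝ)
    (hc : ∀ i, c i = f t0 i - sInt ζ fun t => f t.1 i)
    (Qstar : SignedMeasure T)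
    (hQstar : Qstar = ζ + ∑ j, c j • G j)
    (M : SignedMeasure T → ℝ)
    (hM : ∀ Q : SignedMeasure T,
      M Q = K t0 t0 - 2 * (sInt Q fun t => K t.1 t0)
        + (sInt Q fun t => sInt Q fun s => K t.1 s.1))
    (Q : SignedMeasure T)
    (hQ : ∀ i, sInt Q (fun t => f t.1 i) = f t0 i) :
    M Qstar ≤ M Q := by
  have hK : IsBoundedMeasurable (uncurry K) := ⟨hKmeas, hKbd.imp fun _ hC p => hC p.1 p.2⟩
  have hF : IsBoundedMeasurable (uncurry fun t s : T => K t s) :=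
    hK.comp (measurable_subtype_coe.prodMap measurable_subtype_coe)
  have hKcol (u : Fin d → ℝ) : IsBoundedMeasurable fun t : T => K t u :=
    hK.comp (measurable_subtype_coe.prodMk measurable_const)
  have hf i : IsBoundedMeasurable fun t : T => f t i :=
    ⟨(hfmeas i).comp measurable_subtype_coe, hfbd.imp fun _ hC t => hC t i⟩
  have hQstar_unbiased i : sInt Qstar (fun t => f t i) = f t0 i := by
    rw [hQstar, sInt_add_sum_smul _ (hf i)]
    simp [hG1, hc]
  have hQstar_kernel (t : T) :
      (sInt Qstar fun s => K t s) = K t t0 + ∑ j, (∑ k, c k * D k j) * f t j := by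
    have hKt : (fun s : T => K t s) = fun s : T => K s t := funext fun s => hKsym t s
    rw [hKt, hQstar, sInt_add_sum_smul _ (hKcol t), hζ, hKsym t0]
    simp_rw [hG2, Finset.mul_sum, Finset.sum_mul, mul_assoc]
    rw [Finset.sum_comm]
  have hR j : sInt (Q - Qstar) (fun t => f t j) = 0 := by
    rw [← sIntLinearMap_apply (hf j), map_sub]
    simp [hQ, hQstar_unbiased]
  have horth : kernelForm _ hF (Q - Qstar) Qstar = sIntLinearMap _ (hKcol t0) (Q - Qstar) := by
    rw [kernelForm_apply, sIntLinearMap_apply]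
    simp_rw [hQstar_kernel]
    exact sInt_add_sum_mul_of_forall_eq_zero _ ((hKcol t0).integrable _)
      (fun j => (hf j).integrable _) hR _
  have key := (kernelForm_isSymm hF fun _ _ => hKsym _ _).apply_self_sub_two_mul_le _
    (hKpos (Q - Qstar)) horth
  rw [kernelForm_apply, kernelForm_apply, sIntLinearMap_apply, sIntLinearMap_apply] at key
  rw [hM, hM]
  linarith

/-- Theorem 2.1, optimality of the BLUP at a point.  Under Assumption A,
the measure `Q* = ζ_{t₀} + Σ_j c_j G_j` minimizes the MSE functional
`M(Q) = K(t₀,t₀) − 2∫_T K(t,t₀) Q(dt) + ∬_{T×T} K dQ dQ` among all finite signed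
measures `Q` on `T` satisfying the unbiasedness condition `∫_T f dQ = f(t₀)`. -/
theorem blup_point_optimality {d m : ℕ}
    (T : Set (Fin d → ℝ)) (hT : MeasurableSet T)
    (t0 : Fin d → ℝ) (ht0 : t0 ∉ T)
    (K : (Fin d → ℝ) → (Fin d → ℝ) → ℝ)
    (hKmeas : Measurable (Function.uncurry K))
    (hKbd : ∃ C, ∀ t s, |K t s| ≤ C)
    (hKsym : ∀ t s, K t s = K s t)
    -- nonnegativity of the quadratic form on finite signed measures on `T`:
    (hKpos : ∀ R : SignedMeasure T, 0 ≤ sInt R fun t => sInt R fun s => K t.1 s.1)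
    (f : (Fin d → ℝ) → Fin m → ℝ)
    (hfmeas : ∀ i, Measurable fun t => f t i)
    (hfbd : ∃ C, ∀ t i, |f t i| ≤ C)
    -- (i) existence of the BLUE measure `G` with matrix `D`:
    (G : Fin m → SignedMeasure T) (D : Fin m → Fin m → ℝ)
    (hG1 : ∀ i j, sInt (G j) (fun t => f t.1 i) = if i = j then 1 else 0)
    (hG2 : ∀ (s : T) (k : Fin m),
      sInt (G k) (fun t => K t.1 s.1) = ∑ j, D k j * f s.1 j)
    -- (ii) existence of the measure `ζ_{t₀}`:
    (ζ : SignedMeasure T)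
    (hζ : ∀ s : T, sInt ζ (fun t => K t.1 s.1) = K t0 s.1)
    (c : Fin m → ℝ)
    (hc : ∀ i, c i = f t0 i - sInt ζ fun t => f t.1 i)
    (Qstar : SignedMeasure T)
    (hQstar : Qstar = ζ + ∑ j, c j • G j)
    (M : SignedMeasure T → ℝ)
    (hM : ∀ Q : SignedMeasure T,
      M Q = K t0 t0 - 2 * (sInt Q fun t => K t.1 t0)
        + (sInt Q fun t => sInt Q fun s => K t.1 s.1))
    (Q : SignedMeasure T)
    (hQ : ∀ i, sInt Q (fun t => f t.1 i) = f t0 i) :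
    M Qstar ≤ M Q :=
  blup_point_optimality_general T t0 K hKmeas hKbd hKsym hKpos f hfmeas hfbd G D hG1 hG2 ζ hζ c hc
    Qstar hQstar M hM Q hQ
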